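/- Let C be closed and convex, x ∈ C, α > 0, z(α) = x − αD⁻¹∇f(x), ζ ∈ (0,1], and w(α) ∈ 𝒫_{C,ζ}^D(x, z(α)). Then ⟨∇f(x), w(α) − x⟩ ≤ −(1/(2α))‖w(α) − x‖_D² + (ζ/(2α))[‖P_C^D(z(α)) − z(α)‖_D² − ‖x − z(α)‖_D²]. -/

import Mathlib

/-! With `z = x - α D⁻¹ ∇f(x)`, expanding `‖w - z‖_D² = ‖(w - x) + (x - z)‖_D²` gives
`‖w - x‖_D² + 2α ⟨∇f(x), w - x⟩ + ‖x - z‖_D²`, since the `D`-inner product against `D⁻¹ ∇f(x)`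
is the Euclidean one against `∇f(x)`. Inserting this into the defining inequality of `w`
and dividing by `2α` gives the bound. -/

open RealInnerProductSpace

abbrev EucSp (n : ℕ) := EuclideanSpace ℝ (Fin n)

noncomputable def dipr {n : ℕ} (D : Matrix (Fin n) (Fin n) ℝ) (x y : EucSp n) : ℝ :=
  ⟪(Matrix.toEuclideanLin D) x, y⟫

noncomputable def dnorm {n : ℕ} (D : Matrix (Fin n) (Fin n) ℝ) (x : EucSp n) : ℝ :=
  Real.sqrt (dipr D x x)

/-- `p` is the exact projection of `v` onto `C` in the `D`-norm. -/
def IsDProj {n : ℕ} (D : Matrix (Fin n) (Fin n) ℝ) (C : Set (EucSp n)) (v p : EucSp n) : Prop :=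
  p ∈ C ∧ ∀ z ∈ C, dnorm D (p - v) ≤ dnorm D (z - v)

section DNorm

variable {n : ℕ} {D : Matrix (Fin n) (Fin n) ℝ}

lemma dipr_self_nonneg (hD : D.PosSemidef) (v : EucSp n) : 0 ≤ dipr D v v := by
  rw [dipr, EuclideanSpace.inner_eq_star_dotProduct, Matrix.ofLp_toLpLin, Matrix.toLin'_apply,
    star_trivial]
  simpa using hD.dotProduct_mulVec_nonneg v.ofLp

lemma dnorm_sq (hD : D.PosSemidef) (v : EucSp n) : dnorm D v ^ 2 = dipr D v v :=
  Real.sq_sqrt (dipr_self_nonneg hD v)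

lemma dipr_comm (hD : D.IsHermitian) (a b : EucSp n) : dipr D a b = dipr D b a := by
  rw [dipr, dipr, Matrix.isSymmetric_toEuclideanLin_iff.mpr hD a b, real_inner_comm]

lemma dipr_add_add (a b c d : EucSp n) :
    dipr D (a + b) (c + d) = dipr D a c + dipr D a d + dipr D b c + dipr D b d := by
  simp only [dipr, map_add, inner_add_left, inner_add_right]
  ring

lemma dnorm_sq_add (hD : D.PosSemidef) (a b : EucSp n) :
    dnorm D (a + b) ^ 2 = dnorm D a ^ 2 + 2 * dipr D a b + dnorm D b ^ 2 := by
  rw [dnorm_sq hD, dnorm_sq hD, dnorm_sq hD, dipr_add_add, dipr_comm hD.isHermitian b a]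
  ring

lemma dipr_toEuclideanLin_inv (hD : D.IsHermitian) (hdet : IsUnit D.det) (a v : EucSp n) :
    dipr D a (Matrix.toEuclideanLin D⁻¹ v) = ⟪v, a⟫ := by
  have hDDinv : Matrix.toEuclideanLin D (Matrix.toEuclideanLin D⁻¹ v) = v := by
    rw [← LinearMap.comp_apply, ← Matrix.toLpLin_mul_same, Matrix.mul_nonsing_inv D hdet,
      Matrix.toLpLin_one, LinearMap.id_apply]
  rw [dipr, Matrix.isSymmetric_toEuclideanLin_iff.mpr hD, hDDinv, real_inner_comm]

lemma dnorm_sq_sub_gradientStep (hD : D.PosDef) (g x w : EucSp n) (α : ℝ) :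
    dnorm D (w - (x - α • Matrix.toEuclideanLin D⁻¹ g)) ^ 2 =
      dnorm D (w - x) ^ 2 + 2 * α * ⟪g, w - x⟫ + dnorm D (α • Matrix.toEuclideanLin D⁻¹ g) ^ 2 := by
  have hcross : dipr D (w - x) (α • Matrix.toEuclideanLin D⁻¹ g) = α * ⟪g, w - x⟫ := by
    rw [dipr, inner_smul_right, ← dipr, dipr_toEuclideanLin_inv hD.isHermitian hD.det_pos.ne'.isUnit]
  rw [sub_sub_eq_add_sub, add_sub_right_comm, dnorm_sq_add hD.posSemidef, hcross]
  ring

end DNorm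

theorem stmt9_general {n : ℕ}
    (D : Matrix (Fin n) (Fin n) ℝ) (hD : D.PosDef)
    (g : EucSp n → EucSp n)
    (x : EucSp n) (α : ℝ) (hα : 0 < α) (ζ : ℝ)
    (z : EucSp n) (hz : z = x - α • (Matrix.toEuclideanLin D⁻¹) (g x))
    (p : EucSp n)
    (w : EucSp n)
    (hw : (dnorm D (w - z)) ^ 2 ≤
      ζ * (dnorm D (p - z)) ^ 2 + (1 - ζ) * (dnorm D (x - z)) ^ 2) :
    ⟪g x, w - x⟫ ≤ -(1 / (2 * α)) * (dnorm D (w - x)) ^ 2 +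
      (ζ / (2 * α)) * ((dnorm D (p - z)) ^ 2 - (dnorm D (x - z)) ^ 2) := by
  have hxz : x - z = α • Matrix.toEuclideanLin D⁻¹ (g x) := by rw [hz, sub_sub_cancel]
  have hexpand := dnorm_sq_sub_gradientStep hD (g x) x w α
  rw [← hz, ← hxz] at hexpand
  have h2α : 0 < 2 * α := by positivity
  calc ⟪g x, w - x⟫ = 2 * α * ⟪g x, w - x⟫ / (2 * α) := by field_simp
    _ ≤ (-dnorm D (w - x) ^ 2 + ζ * (dnorm D (p - z) ^ 2 - dnorm D (x - z) ^ 2)) / (2 * α) := by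
        gcongr
        linarith
    _ = _ := by ring

theorem stmt9 {n : ℕ} (C : Set (EucSp n)) (hcl : IsClosed C) (hconv : Convex ℝ C)
    (D : Matrix (Fin n) (Fin n) ℝ) (hD : D.PosDef)
    (f : EucSp n → ℝ) (g : EucSp n → EucSp n) (hf : ∀ x, HasGradientAt f (g x) x)
    (x : EucSp n) (hx : x ∈ C) (α : ℝ) (hα : 0 < α) (ζ : ℝ) (hζ : 0 < ζ ∧ ζ ≤ 1)
    (z : EucSp n) (hz : z = x - α • (Matrix.toEuclideanLin D⁻¹) (g x))
    (p : EucSp n) (hp : IsDProj D C z p)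
    (w : EucSp n) (hwC : w ∈ C)
    (hw : (dnorm D (w - z)) ^ 2 ≤
      ζ * (dnorm D (p - z)) ^ 2 + (1 - ζ) * (dnorm D (x - z)) ^ 2) :
    ⟪g x, w - x⟫ ≤ -(1 / (2 * α)) * (dnorm D (w - x)) ^ 2 +
      (ζ / (2 * α)) * ((dnorm D (p - z)) ^ 2 - (dnorm D (x - z)) ^ 2) :=
  stmt9_general D hD g x α hα ζ z hz p w hw
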